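/- Let κ ≥ 4 and let h : [0, π] → ℝ be continuously differentiable on [0, π] and twice differentiable on (0, π), solving the profile equation h''(θ) + (cos θ / sin θ)·h'(θ) − sin(2h(θ))/(2 sin²θ) − (κ/2)·sin(2h(θ) − 2θ) = 0 on (0, π), with h(0) = h(π) = π, h(θ) + h(π − θ) = 2π for all θ ∈ [0, π], and π ≤ h(θ) ≤ π + θ for all θ ∈ [0, π/2]. Then −h'(π/2) ≤ 2·√(2·E(h)·√κ), where E(h) = (1/2)·∫₀^π [h'(θ)²·sin θ + sin²(h(θ))/sin θ + κ·sin²(h(θ) − θ)·sin θ] dθ. -/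

import Mathlib

/-!
In the variable `s = log tan (θ / 2)`, where `∂ₛ = sin θ ∂_θ`, the profile equation with `κ = 0`
is the pendulum equation `h_ss = sin h cos h`, with conserved energy
`W = ((sin θ · h')² - sin² h) / 2`. For `κ > 0` one gets
`W' = (κ / 2) sin² θ sin (2h - 2θ) h'`, and AM–GM bounds this by `√κ / 2` times the energy
density. Since `h (0) = h (π / 2) = π`, integrating over `[0, π / 2]` gives
`h'(π / 2)² / 2 = W (π / 2) - W 0 ≤ (√κ / 2) · 2 E(h)`.
The energy is finite because `sin ∘ h` is Lipschitz and vanishes at both poles, while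
`sin θ ≥ (2 / π) min θ (π - θ)`.
-/

open Real Set MeasureTheory intervalIntegral

lemma two_div_pi_mul_min_le_sin {θ : ℝ} (h0 : 0 ≤ θ) (hπ : θ ≤ π) :
    2 / π * min θ (π - θ) ≤ sin θ := by
  rcases le_total θ (π / 2) with hθ | hθ
  · exact (mul_le_mul_of_nonneg_left (min_le_left _ _) (by positivity)).trans (mul_le_sin h0 hθ)
  · rw [← sin_pi_sub]
    exact (mul_le_mul_of_nonneg_left (min_le_right _ _) (by positivity)).trans
      (mul_le_sin (by linarith) (by linarith))

lemma LipschitzOnWith.sq_div_sin_le {u : ℝ → ℝ} {K : NNReal}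
    (hu : LipschitzOnWith K u (Icc 0 π)) (h0 : u 0 = 0) (hπ : u π = 0) {θ : ℝ}
    (hθ : θ ∈ Ioo 0 π) : u θ ^ 2 / sin θ ≤ K ^ 2 * π ^ 2 / 4 := by
  set m := min θ (π - θ)
  have hm : 0 ≤ m := le_min hθ.1.le (by linarith [hθ.2])
  have hmπ : m ≤ π / 2 := by linarith [min_le_left θ (π - θ), min_le_right θ (π - θ)]
  have hθ' := Ioo_subset_Icc_self hθ
  have hleft := hu.dist_le_mul θ hθ' 0 (left_mem_Icc.2 pi_pos.le)
  have hright := hu.dist_le_mul θ hθ' π (right_mem_Icc.2 pi_pos.le)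
  rw [h0, Real.dist_eq, Real.dist_eq, sub_zero, sub_zero, abs_of_pos hθ.1] at hleft
  rw [hπ, Real.dist_eq, Real.dist_eq, sub_zero, abs_sub_comm, abs_of_pos (sub_pos.2 hθ.2)] at hright
  have hum : |u θ| ≤ K * m := le_min hleft hright |>.trans_eq (mul_min_of_nonneg _ _ K.2).symm
  have hsin := two_div_pi_mul_min_le_sin hθ.1.le hθ.2.le
  rw [div_le_iff₀ (sin_pos_of_pos_of_lt_pi hθ.1 hθ.2)]
  calc u θ ^ 2 = |u θ| ^ 2 := (sq_abs _).symm
    _ ≤ (K * m) ^ 2 := pow_le_pow_left₀ (abs_nonneg _) hum 2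
    _ ≤ K ^ 2 * π ^ 2 / 4 * (2 / π * m) := by
      have : (K : ℝ) ^ 2 * π ^ 2 / 4 * (2 / π * m) = K ^ 2 * (π / 2) * m := by
        field_simp; ring
      rw [this, mul_pow, mul_assoc]
      gcongr
      nlinarith
    _ ≤ K ^ 2 * π ^ 2 / 4 * sin θ := by gcongr

lemma LipschitzOnWith.intervalIntegrable_sq_div_sin {u : ℝ → ℝ} {K : NNReal}
    (hu : LipschitzOnWith K u (Icc 0 π)) (h0 : u 0 = 0) (hπ : u π = 0) :
    IntervalIntegrable (fun θ => u θ ^ 2 / sin θ) volume 0 π := by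
  have hcont : ContinuousOn (fun θ => u θ ^ 2 / sin θ) (Ioo 0 π) :=
    ((hu.continuousOn.mono Ioo_subset_Icc_self).pow 2).div continuous_sin.continuousOn
      fun θ hθ => (sin_pos_of_pos_of_lt_pi hθ.1 hθ.2).ne'
  rw [intervalIntegrable_iff_integrableOn_Ioo_of_le pi_pos.le]
  refine (integrableOn_const (C := (K : ℝ) ^ 2 * π ^ 2 / 4) measure_Ioo_lt_top.ne).mono'
    (hcont.aestronglyMeasurable measurableSet_Ioo) ?_
  refine (ae_restrict_iff' measurableSet_Ioo).2 (.of_forall fun θ hθ => ?_)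
  rw [Real.norm_eq_abs, abs_of_nonneg
    (div_nonneg (sq_nonneg _) (sin_pos_of_pos_of_lt_pi hθ.1 hθ.2).le)]
  exact hu.sq_div_sin_le h0 hπ hθ

lemma mul_sq_mul_sin_two_mul_le {κ a : ℝ} (hκ : 0 ≤ κ) (ha0 : 0 ≤ a) (ha1 : a ≤ 1) (x y : ℝ) :
    κ / 2 * a ^ 2 * sin (2 * x) * y ≤ √κ / 2 * (y ^ 2 + κ * sin x ^ 2) * a := by
  have hsq : √κ ^ 2 = κ := sq_sqrt hκ
  have amgm : κ * |sin x * y| ≤ √κ / 2 * (y ^ 2 + κ * sin x ^ 2) := by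
    have h2 : 2 * √κ * |sin x * y| ≤ y ^ 2 + κ * sin x ^ 2 := by
      rw [abs_mul]
      nlinarith [sq_nonneg (√κ * |sin x| - |y|), sq_abs (sin x), sq_abs y]
    calc κ * |sin x * y| = √κ / 2 * (2 * √κ * |sin x * y|) := by
          linear_combination (-|sin x * y|) * hsq
      _ ≤ √κ / 2 * (y ^ 2 + κ * sin x ^ 2) := by gcongr
  have hcos : cos x * (sin x * y) ≤ |sin x * y| := (le_abs_self _).trans <| by
    rw [abs_mul]; exact mul_le_of_le_one_left (abs_nonneg _) (abs_cos_le_one x)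
  calc κ / 2 * a ^ 2 * sin (2 * x) * y = κ * (a ^ 2 * (cos x * (sin x * y))) := by
        rw [sin_two_mul]; ring
    _ ≤ κ * (a ^ 2 * |sin x * y|) := by gcongr
    _ ≤ κ * (a * |sin x * y|) := by gcongr; nlinarith
    _ = a * (κ * |sin x * y|) := by ring
    _ ≤ a * (√κ / 2 * (y ^ 2 + κ * sin x ^ 2)) := by gcongr
    _ = √κ / 2 * (y ^ 2 + κ * sin x ^ 2) * a := by ring

noncomputable section

def pendulumEnergy (h g : ℝ → ℝ) (θ : ℝ) : ℝ := ((sin θ * g θ) ^ 2 - sin (h θ) ^ 2) / 2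

def energyDensity (κ : ℝ) (h g : ℝ → ℝ) (θ : ℝ) : ℝ :=
  g θ ^ 2 * sin θ + sin (h θ) ^ 2 / sin θ + κ * sin (h θ - θ) ^ 2 * sin θ

end

lemma hasDerivAt_pendulumEnergy {κ θ h'' : ℝ} {h g : ℝ → ℝ} (hθ : sin θ ≠ 0)
    (hh : HasDerivAt h (g θ) θ) (hg : HasDerivAt g h'' θ)
    (hode : h'' + cos θ / sin θ * g θ - sin (2 * h θ) / (2 * sin θ ^ 2)
      - κ / 2 * sin (2 * h θ - 2 * θ) = 0) :
    HasDerivAt (pendulumEnergy h g) (κ / 2 * sin θ ^ 2 * sin (2 * h θ - 2 * θ) * g θ) θ := by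
  have hW := ((((hasDerivAt_sin θ).mul hg).pow 2).sub
    (((hasDerivAt_sin (h θ)).comp θ hh).pow 2)).div_const 2
  refine hW.congr_deriv ?_
  have hsolve : h'' = -(cos θ / sin θ) * g θ + sin (2 * h θ) / (2 * sin θ ^ 2)
      + κ / 2 * sin (2 * h θ - 2 * θ) := by linear_combination hode
  simp only [Pi.mul_apply, Function.comp_apply]
  rw [hsolve, sin_two_mul]
  field_simp
  ring

lemma energyDensity_nonneg {κ θ : ℝ} (h g : ℝ → ℝ) (hκ : 0 ≤ κ) (hθ : θ ∈ Icc 0 π) :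
    0 ≤ energyDensity κ h g θ := by
  have := sin_nonneg_of_nonneg_of_le_pi hθ.1 hθ.2
  unfold energyDensity
  positivity

lemma LipschitzOnWith.intervalIntegrable_energyDensity {κ : ℝ} {h g : ℝ → ℝ} {K : NNReal}
    (hh : LipschitzOnWith K h (Icc 0 π)) (hg : ContinuousOn g (Icc 0 π))
    (h0 : sin (h 0) = 0) (hπ : sin (h π) = 0) :
    IntervalIntegrable (energyDensity κ h g) volume 0 π := by
  have hsin : ContinuousOn sin (Icc 0 π) := continuous_sin.continuousOn
  refine .add (.add ?_ ?_) ?_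
  · exact ((hg.pow 2).mul hsin).intervalIntegrable_of_Icc pi_pos.le
  · exact (lipschitzWith_sin.comp_lipschitzOnWith hh).intervalIntegrable_sq_div_sin h0 hπ
  · exact ((continuousOn_const.mul ((continuous_sin.comp_continuousOn
      (hh.continuousOn.sub continuousOn_id)).pow 2)).mul hsin).intervalIntegrable_of_Icc pi_pos.le

lemma sq_le_sqrt_mul_integral_energyDensity {κ : ℝ} {h g : ℝ → ℝ} (hκ : 0 ≤ κ)
    (hh : ContinuousOn h (Icc 0 π)) (hg : ContinuousOn g (Icc 0 π))
    (hint : IntervalIntegrable (energyDensity κ h g) volume 0 π)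
    (h0 : sin (h 0) = 0) (hmid : sin (h (π / 2)) = 0)
    (hW : ∀ θ ∈ Ioo 0 (π / 2), HasDerivAt (pendulumEnergy h g)
      (κ / 2 * sin θ ^ 2 * sin (2 * h θ - 2 * θ) * g θ) θ) :
    g (π / 2) ^ 2 ≤ √κ * ∫ θ in 0..π, energyDensity κ h g θ := by
  have hπ2 : 0 ≤ π / 2 := by positivity
  have hsub : Icc 0 (π / 2) ⊆ Icc 0 π := Icc_subset_Icc_right (by linarith [pi_pos])
  have hh' := hh.mono hsub
  have hg' := hg.mono hsub
  have hsin : ContinuousOn sin (Icc 0 (π / 2)) := continuous_sin.continuousOn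
  have hWcont : ContinuousOn (pendulumEnergy h g) (Icc 0 (π / 2)) :=
    (((hsin.mul hg').pow 2).sub ((continuous_sin.comp_continuousOn hh').pow 2)).div_const 2
  have hFint : IntervalIntegrable
      (fun θ => κ / 2 * sin θ ^ 2 * sin (2 * h θ - 2 * θ) * g θ) volume 0 (π / 2) :=
    (((continuousOn_const.mul (hsin.pow 2)).mul (continuous_sin.comp_continuousOn
      ((continuousOn_const.mul hh').sub (continuousOn_const.mul continuousOn_id)))).mul
      hg').intervalIntegrable_of_Icc hπ2
  have hFTC := integral_eq_sub_of_hasDeriv_right_of_le hπ2 hWcont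
    (fun θ hθ => (hW θ hθ).hasDerivWithinAt) hFint
  have hrate : ∀ θ ∈ Icc 0 (π / 2), κ / 2 * sin θ ^ 2 * sin (2 * h θ - 2 * θ) * g θ
      ≤ √κ / 2 * energyDensity κ h g θ := by
    intro θ hθ
    have hs := sin_nonneg_of_nonneg_of_le_pi hθ.1 (by linarith [hθ.2, pi_pos])
    have := div_nonneg (sq_nonneg (sin (h θ))) hs
    rw [show 2 * h θ - 2 * θ = 2 * (h θ - θ) by ring]
    refine (mul_sq_mul_sin_two_mul_le hκ hs (sin_le_one θ) _ _).trans ?_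
    unfold energyDensity
    nlinarith [sqrt_nonneg κ]
  have hhalf : ∫ θ in 0..π / 2, energyDensity κ h g θ ≤ ∫ θ in 0..π, energyDensity κ h g θ :=
    integral_mono_interval le_rfl hπ2 (by linarith [pi_pos])
      ((ae_restrict_iff' measurableSet_Ioc).2 (.of_forall fun θ hθ =>
        energyDensity_nonneg h g hκ (Ioc_subset_Icc_self hθ))) hint
  have hbound := integral_mono_on hπ2 hFint ((hint.mono_set (by
    rw [uIcc_of_le hπ2, uIcc_of_le pi_pos.le]; exact hsub)).const_mul (√κ / 2)) hrate
  rw [intervalIntegral.integral_const_mul, hFTC] at hbound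
  simp only [pendulumEnergy, sin_zero, sin_pi_div_two, h0, hmid] at hbound
  nlinarith [sqrt_nonneg κ]

theorem equator_derivative_bound_general (κ : ℝ) (hκ : 4 ≤ κ) (h : ℝ → ℝ)
    (hC1 : ContDiffOn ℝ 1 h (Set.Icc 0 π))
    (hC2 : ∀ θ ∈ Set.Ioo (0 : ℝ) π, DifferentiableAt ℝ (deriv h) θ)
    (heq : ∀ θ ∈ Set.Ioo (0 : ℝ) π,
      deriv (deriv h) θ + (Real.cos θ / Real.sin θ) * deriv h θ
        - Real.sin (2 * h θ) / (2 * Real.sin θ ^ 2)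
        - (κ / 2) * Real.sin (2 * h θ - 2 * θ) = 0)
    (h0 : h 0 = π) (hπ : h π = π)
    (hsym : ∀ θ ∈ Set.Icc (0 : ℝ) π, h θ + h (π - θ) = 2 * π) :
    -deriv h (π / 2) ≤
      2 * Real.sqrt (2 * ((1 / 2) * (∫ θ in (0 : ℝ)..π,
          (deriv h θ) ^ 2 * Real.sin θ
          + Real.sin (h θ) ^ 2 / Real.sin θ
          + κ * Real.sin (h θ - θ) ^ 2 * Real.sin θ)) * Real.sqrt κ) := by
  -- `deriv h` may be junk at the poles; the derivative within `[0, π]` is continuous up to them.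
  set g := derivWithin h (Icc 0 π)
  have hderiv : ∀ θ ∈ Ioo 0 π, deriv h θ = g θ := fun θ hθ =>
    (derivWithin_of_mem_nhds (Icc_mem_nhds hθ.1 hθ.2)).symm
  have hh' : ∀ θ ∈ Ioo 0 π, HasDerivAt h (g θ) θ := fun θ hθ => by
    rw [← hderiv θ hθ]
    exact ((hC1.contDiffAt (Icc_mem_nhds hθ.1 hθ.2)).differentiableAt one_ne_zero).hasDerivAt
  have hg' : ∀ θ ∈ Ioo 0 π, HasDerivAt g (deriv (deriv h) θ) θ := fun θ hθ =>
    (hC2 θ hθ).hasDerivAt.congr_of_eventuallyEq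
      (Filter.eventually_of_mem (Ioo_mem_nhds hθ.1 hθ.2) fun t ht => (hderiv t ht).symm)
  have hequator : π / 2 ∈ Ioo 0 π := ⟨by positivity, by linarith [pi_pos]⟩
  have hmid : h (π / 2) = π := by
    have := hsym (π / 2) (Ioo_subset_Icc_self hequator)
    rw [show π - π / 2 = π / 2 by ring] at this
    linarith
  obtain ⟨K, hK⟩ := hC1.exists_lipschitzOnWith one_ne_zero (convex_Icc 0 π) isCompact_Icc
  have hg : ContinuousOn g (Icc 0 π) := hC1.continuousOn_derivWithin (uniqueDiffOn_Icc pi_pos) le_rfl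
  have hbound := sq_le_sqrt_mul_integral_energyDensity (zero_le_four.trans hκ) hC1.continuousOn hg
    (hK.intervalIntegrable_energyDensity hg (by simp [h0]) (by simp [hπ])) (by simp [h0])
    (by simp [hmid]) fun θ hθ => by
      have hθ' : θ ∈ Ioo 0 π := ⟨hθ.1, hθ.2.trans hequator.2⟩
      exact hasDerivAt_pendulumEnergy (sin_pos_of_pos_of_lt_pi hθ'.1 hθ'.2).ne' (hh' θ hθ')
        (hg' θ hθ') (hderiv θ hθ' ▸ heq θ hθ')
  have hE : ∫ θ in 0..π, energyDensity κ h g θ = ∫ θ in 0..π, energyDensity κ h (deriv h) θ :=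
    integral_congr_Ioo_of_le pi_pos.le fun θ hθ => by simp only [energyDensity, hderiv θ hθ]
  rw [← hderiv _ hequator, hE] at hbound
  set E := ∫ θ in 0..π, energyDensity κ h (deriv h) θ
  show -deriv h (π / 2) ≤ 2 * √(2 * (1 / 2 * E) * √κ)
  rw [show 2 * (1 / 2 * E) * √κ = √κ * E by ring]
  linarith [neg_le_abs (deriv h (π / 2)), abs_le_sqrt hbound, sqrt_nonneg (√κ * E)]

/-- Bound on the derivative at the equator for hemispheric type-(1,1) critical
    profiles in the first wedge: −h'(π/2) ≤ 2√(2 E(h) √κ). -/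
theorem equator_derivative_bound (κ : ℝ) (hκ : 4 ≤ κ) (h : ℝ → ℝ)
    (hC1 : ContDiffOn ℝ 1 h (Set.Icc 0 π))
    (hC2 : ∀ θ ∈ Set.Ioo (0 : ℝ) π, DifferentiableAt ℝ (deriv h) θ)
    (heq : ∀ θ ∈ Set.Ioo (0 : ℝ) π,
      deriv (deriv h) θ + (Real.cos θ / Real.sin θ) * deriv h θ
        - Real.sin (2 * h θ) / (2 * Real.sin θ ^ 2)
        - (κ / 2) * Real.sin (2 * h θ - 2 * θ) = 0)
    (h0 : h 0 = π) (hπ : h π = π)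
    (hsym : ∀ θ ∈ Set.Icc (0 : ℝ) π, h θ + h (π - θ) = 2 * π)
    (hwedge : ∀ θ ∈ Set.Icc (0 : ℝ) (π / 2), π ≤ h θ ∧ h θ ≤ π + θ) :
    -deriv h (π / 2) ≤
      2 * Real.sqrt (2 * ((1 / 2) * (∫ θ in (0 : ℝ)..π,
          (deriv h θ) ^ 2 * Real.sin θ
          + Real.sin (h θ) ^ 2 / Real.sin θ
          + κ * Real.sin (h θ - θ) ^ 2 * Real.sin θ)) * Real.sqrt κ) :=
  equator_derivative_bound_general κ hκ h hC1 hC2 heq h0 hπ hsym
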